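/- The Newton polytope of the toric Jacobian J^T_f = x₁⋯x_n · det(∂f_i/∂x_j)_{i,j} of n Laurent polynomials f₁,…,f_n in n variables is contained in the Minkowski sum N(f₁) + ⋯ + N(f_n) of their Newton polytopes. -/

import Mathlib

/-!
Expanding the determinant writes the toric Jacobian as a signed sum over permutations `σ` of
products `∏ i, x_i ∂_i f_{σ i}`. The operator `x_i ∂_i` only rescales coefficients, so each
product is supported in the Minkowski sum of the supports of the `f_i`, and taking convex hulls
commutes with Minkowski sums.
-/

open Finsupp Pointwise

/-- A Laurent polynomial in `n` variables over `K`. -/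
abbrev LaurentPoly (K : Type*) [CommRing K] (n : ℕ) := AddMonoidAlgebra K (Fin n → ℤ)

/-- The operator `x_i ∂/∂x_i` on Laurent polynomials. -/
noncomputable def xd {K : Type*} [CommRing K] {n : ℕ} (i : Fin n)
    (f : LaurentPoly K n) : LaurentPoly K n :=
  AddMonoidAlgebra.ofCoeff (f.coeff.sum fun a c => Finsupp.single a ((a i : ℤ) • c))

/-- The Newton polytope of a Laurent polynomial: the convex hull (in `ℝⁿ`) of its
support. -/
noncomputable def newton {K : Type*} [CommRing K] {n : ℕ} (f : LaurentPoly K n) :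
    Set (Fin n → ℝ) :=
  convexHull ℝ ((fun a : Fin n → ℤ => fun i => (a i : ℝ)) '' (f.coeff.support : Set (Fin n → ℤ)))

/-- The toric Jacobian `x₁⋯x_n · det(∂f_i/∂x_j) = det(x_j ∂f_i/∂x_j)` of `n` Laurent
polynomials in `n` variables. -/
noncomputable def toricJacobian {K : Type*} [CommRing K] {n : ℕ}
    (f : Fin n → LaurentPoly K n) : LaurentPoly K n :=
  Matrix.det (Matrix.of fun i j => xd j (f i))

namespace AddMonoidAlgebra

theorem support_coeff_finsetProd_subset {k G ι : Type*} [CommSemiring k] [AddCommMonoid G]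
    (s : Finset ι) (g : ι → AddMonoidAlgebra k G) :
    ((∏ i ∈ s, g i).coeff.support : Set G) ⊆ ∑ i ∈ s, ((g i).coeff.support : Set G) := by
  classical
  induction s using Finset.cons_induction with
  | empty => simpa using Finset.coe_subset.mpr (support_coeff_one_subset (k := k) (G := G))
  | cons c s _ ih =>
    rw [Finset.prod_cons, Finset.sum_cons]
    refine (Finset.coe_subset.mpr (support_coeff_mul_subset _ _)).trans ?_
    rw [Finset.coe_add]
    exact Set.add_subset_add_left ih

end AddMonoidAlgebra

theorem support_xd_subset {K : Type*} [CommRing K] {n : ℕ} (i : Fin n) (f : LaurentPoly K n) :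
    (xd i f).coeff.support ⊆ f.coeff.support := by
  classical
  rw [xd, AddMonoidAlgebra.coeff_ofCoeff]
  refine Finsupp.support_sum.trans fun a ha => ?_
  obtain ⟨b, hb, hab⟩ := Finset.mem_biUnion.mp ha
  rwa [Finset.mem_singleton.mp (Finsupp.support_single_subset hab)]

theorem support_toricJacobian_subset {K : Type*} [CommRing K] {n : ℕ}
    (f : Fin n → LaurentPoly K n) :
    ((toricJacobian f).coeff.support : Set (Fin n → ℤ)) ⊆ ∑ i, ((f i).coeff.support : Set _) := by
  classical
  intro a ha
  rw [toricJacobian, Matrix.det_apply, AddMonoidAlgebra.coeff_sum] at ha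
  obtain ⟨σ, -, hσ⟩ := Finsupp.mem_support_finsetSum a ha
  have h_term : a ∈ ((∏ i, xd i (f (σ i))).coeff.support : Set _) := Finsupp.support_smul hσ
  rw [← Equiv.sum_comp σ]
  exact Set.finsetSum_subset_finsetSum _ _ _ (fun i _ => support_xd_subset i (f (σ i)))
    (AddMonoidAlgebra.support_coeff_finsetProd_subset _ _ h_term)

/-- The Newton polytope of the toric Jacobian of `f₁,…,f_n` is contained in the
Minkowski sum `N(f₁) + ⋯ + N(f_n)` of their Newton polytopes. -/
theorem newton_toricJacobian_subset {K : Type*} [CommRing K] {n : ℕ}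
    (f : Fin n → LaurentPoly K n) :
    newton (toricJacobian f) ⊆ ∑ i, newton (f i) := by
  let toReal : (Fin n → ℤ) →+ (Fin n → ℝ) := (Int.castAddHom ℝ).compLeft (Fin n)
  calc newton (toricJacobian f)
      ⊆ convexHull ℝ (toReal '' ∑ i, ((f i).coeff.support : Set _)) :=
        convexHull_mono (Set.image_mono (support_toricJacobian_subset f))
    _ = ∑ i, newton (f i) := by
        rw [Set.image_finsetSum, convexHull_sum]
        rfl
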